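/- Suppose T*_1 ⊆ T*_0 (so on the disagreement region S = T*_0 \ T*_1, the classifier T*_0 predicts positively), and let T be a well-defined classifier with T*_1 ⊆ T ⊆ T*_0. Assume TPR_0(T*_0) < TPR_1(T*_1), TNR_0(T*_0) > TNR_1(T*_1), and the positivity conditions ∫_{T*_0 \ T} f_{0,1} dν > 0, ∫_{T \ T*_1} f_{1,1} dν > 0, ∫_{T*_0 \ T} f_{0,0} dν > 0, ∫_{T \ T*_1} f_{1,0} dν > 0. Then F_U(T) = F_DU + F_MU(T), and F_MU(T) > 0. -/

import Mathlib

open MeasureTheory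

/-- True positive rate of group `a` under classifier `T`: `TPR_a(T) = ∫_T f_{a,1} dν`. -/
noncomputable def tprOf {Ω : Type*} [MeasurableSpace Ω] (ν : Measure Ω)
    (f : Bool → Bool → Ω → ℝ) (a : Bool) (T : Set Ω) : ℝ :=
  ∫ x in T, f a true x ∂ν

/-- True negative rate of group `a` under classifier `T`: `TNR_a(T) = ∫_{Tᶜ} f_{a,0} dν`. -/
noncomputable def tnrOf {Ω : Type*} [MeasurableSpace Ω] (ν : Measure Ω)
    (f : Bool → Bool → Ω → ℝ) (a : Bool) (T : Set Ω) : ℝ :=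
  ∫ x in Tᶜ, f a false x ∂ν

/-- Equalized-odds unfairness. -/
noncomputable def unfairness {Ω : Type*} [MeasurableSpace Ω] (ν : Measure Ω)
    (f : Bool → Bool → Ω → ℝ) (T : Set Ω) : ℝ :=
  (1/2) * |tprOf ν f true T - tprOf ν f false T|
    + (1/2) * |tnrOf ν f true T - tnrOf ν f false T|

/-- Data unfairness relative to reference (per-group optimal) classifiers `T*_0, T*_1`. -/
noncomputable def dataUnfairness {Ω : Type*} [MeasurableSpace Ω] (ν : Measure Ω)
    (f : Bool → Bool → Ω → ℝ) (T0 T1 : Set Ω) : ℝ :=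
  (1/2) * |tprOf ν f false T0 - tprOf ν f true T1|
    + (1/2) * |tnrOf ν f false T0 - tnrOf ν f true T1|

/-- Model unfairness of `T` relative to reference classifiers `T*_0, T*_1`. -/
noncomputable def modelUnfairness {Ω : Type*} [MeasurableSpace Ω] (ν : Measure Ω)
    (f : Bool → Bool → Ω → ℝ) (T0 T1 T : Set Ω) : ℝ :=
  (1/2) * |(tprOf ν f false T - tprOf ν f false T0)
      - (tprOf ν f true T - tprOf ν f true T1)|
    + (1/2) * |(tnrOf ν f false T - tnrOf ν f false T0)
      - (tnrOf ν f true T - tnrOf ν f true T1)|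

/-
Up to sign, each absolute value in `F_U(T)` is `|u + v|`, where `u` is the data gap inside `F_DU`
and `v` the model gap inside `F_MU(T)`; so `F_U = F_DU + F_MU` once `u` and `v` have the same sign.
For `T*_1 ⊆ T ⊆ T*_0` the model gaps are masses of `T*_0 \ T` and `T \ T*_1`: the TPR gap is minus
the positive-label mass, of the sign of `TPR₀(T*_0) - TPR₁(T*_1) < 0`, and the TNR gap is the
negative-label mass, of the sign of `TNR₀(T*_0) - TNR₁(T*_1) > 0`. Both are nonzero, so `F_MU > 0`.
-/

lemma abs_add_eq_abs_add_abs_of_mul_nonneg {R : Type*} [Ring R] [LinearOrder R]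
    [IsStrictOrderedRing R] {a b : R} (h : 0 ≤ a * b) : |a + b| = |a| + |b| :=
  (abs_add_eq_add_abs_iff a b).mpr (mul_nonneg_iff.mp h)

section

variable {Ω : Type*} [MeasurableSpace Ω] (ν : Measure Ω) (f : Bool → Bool → Ω → ℝ)

lemma tprOf_sub_tprOf_of_subset {a : Bool} {A B : Set Ω} (hB : MeasurableSet B) (hBA : B ⊆ A)
    (hf : Integrable (f a true) ν) :
    tprOf ν f a A - tprOf ν f a B = ∫ x in A \ B, f a true x ∂ν :=
  (setIntegral_sdiff hB hf.integrableOn hBA).symm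

lemma tnrOf_sub_tnrOf_of_subset {a : Bool} {A B : Set Ω} (hA : MeasurableSet A) (hBA : B ⊆ A)
    (hf : Integrable (f a false) ν) :
    tnrOf ν f a B - tnrOf ν f a A = ∫ x in A \ B, f a false x ∂ν := by
  rw [tnrOf, tnrOf, ← setIntegral_sdiff hA.compl hf.integrableOn (Set.compl_subset_compl.mpr hBA),
    compl_sdiff_compl]

lemma unfairness_eq_dataUnfairness_add_modelUnfairness (T0 T1 T : Set Ω)
    (htpr : 0 ≤ (tprOf ν f false T0 - tprOf ν f true T1)
      * ((tprOf ν f false T - tprOf ν f false T0) - (tprOf ν f true T - tprOf ν f true T1)))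
    (htnr : 0 ≤ (tnrOf ν f false T0 - tnrOf ν f true T1)
      * ((tnrOf ν f false T - tnrOf ν f false T0) - (tnrOf ν f true T - tnrOf ν f true T1))) :
    unfairness ν f T = dataUnfairness ν f T0 T1 + modelUnfairness ν f T0 T1 T := by
  unfold unfairness dataUnfairness modelUnfairness
  rw [show tprOf ν f true T - tprOf ν f false T = -((tprOf ν f false T0 - tprOf ν f true T1)
      + ((tprOf ν f false T - tprOf ν f false T0) - (tprOf ν f true T - tprOf ν f true T1))) by ring,
    show tnrOf ν f true T - tnrOf ν f false T = -((tnrOf ν f false T0 - tnrOf ν f true T1)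
      + ((tnrOf ν f false T - tnrOf ν f false T0) - (tnrOf ν f true T - tnrOf ν f true T1))) by ring,
    abs_neg, abs_neg, abs_add_eq_abs_add_abs_of_mul_nonneg htpr,
    abs_add_eq_abs_add_abs_of_mul_nonneg htnr]
  ring

end

theorem unfairness_decomposition_equality_cond1_general
    {Ω : Type*} [MeasurableSpace Ω] (ν : Measure Ω)
    (f : Bool → Bool → Ω → ℝ)
    (hf_int : ∀ a y, Integrable (f a y) ν)
    (T0 T1 : Set Ω) (hT0 : MeasurableSet T0) (hT1 : MeasurableSet T1)
    (T : Set Ω) (hT : MeasurableSet T) (hT1T : T1 ⊆ T) (hTT0 : T ⊆ T0)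
    (htpr : tprOf ν f false T0 < tprOf ν f true T1)
    (htnr : tnrOf ν f true T1 < tnrOf ν f false T0)
    (hpos1 : 0 < ∫ x in T0 \ T, f false true x ∂ν)
    (hpos2 : 0 < ∫ x in T \ T1, f true true x ∂ν)
    (hpos3 : 0 < ∫ x in T0 \ T, f false false x ∂ν)
    (hpos4 : 0 < ∫ x in T \ T1, f true false x ∂ν) :
    unfairness ν f T = dataUnfairness ν f T0 T1 + modelUnfairness ν f T0 T1 T ∧
      0 < modelUnfairness ν f T0 T1 T := by
  have htpr_gap : (tprOf ν f false T - tprOf ν f false T0) - (tprOf ν f true T - tprOf ν f true T1)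
      = -((∫ x in T0 \ T, f false true x ∂ν) + ∫ x in T \ T1, f true true x ∂ν) := by
    rw [← tprOf_sub_tprOf_of_subset ν f hT hTT0 (hf_int _ _),
      ← tprOf_sub_tprOf_of_subset ν f hT1 hT1T (hf_int _ _)]
    ring
  have htnr_gap : (tnrOf ν f false T - tnrOf ν f false T0) - (tnrOf ν f true T - tnrOf ν f true T1)
      = (∫ x in T0 \ T, f false false x ∂ν) + ∫ x in T \ T1, f true false x ∂ν := by
    rw [← tnrOf_sub_tnrOf_of_subset ν f hT0 hTT0 (hf_int _ _),
      ← tnrOf_sub_tnrOf_of_subset ν f hT hT1T (hf_int _ _)]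
    ring
  refine ⟨unfairness_eq_dataUnfairness_add_modelUnfairness ν f T0 T1 T ?_ ?_, ?_⟩
  · rw [htpr_gap]
    exact mul_nonneg_of_nonpos_of_nonpos (by linarith) (by linarith)
  · rw [htnr_gap]
    exact mul_nonneg (by linarith) (by linarith)
  · rw [modelUnfairness, htpr_gap, htnr_gap, abs_neg, abs_of_pos (add_pos hpos1 hpos2),
      abs_of_pos (add_pos hpos3 hpos4)]
    linarith

/-- Equality case of the unfairness decomposition (Condition 1 of Theorem 3):
if `T*_1 ⊆ T*_0` (so on the disagreement region `S = T*_0 \ T*_1` the classifier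
`T*_0` predicts positively), `T` is well-defined (`T*_1 ⊆ T ⊆ T*_0`),
`TPR₀(T*_0) < TPR₁(T*_1)`, `TNR₀(T*_0) > TNR₁(T*_1)`, and the stated integrals are
strictly positive, then `F_U(T) = F_DU + F_MU(T)` and `F_MU(T) > 0`. -/
theorem unfairness_decomposition_equality_cond1
    {Ω : Type*} [MeasurableSpace Ω] (ν : Measure Ω) [SigmaFinite ν]
    (f : Bool → Bool → Ω → ℝ)
    (hf_meas : ∀ a y, Measurable (f a y))
    (hf_nonneg : ∀ a y x, 0 ≤ f a y x)
    (hf_int : ∀ a y, Integrable (f a y) ν)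
    (hf_one : ∀ a y, ∫ x, f a y x ∂ν = 1)
    (T0 T1 : Set Ω) (hT0 : MeasurableSet T0) (hT1 : MeasurableSet T1)
    (hsub : T1 ⊆ T0)
    (T : Set Ω) (hT : MeasurableSet T) (hT1T : T1 ⊆ T) (hTT0 : T ⊆ T0)
    (htpr : tprOf ν f false T0 < tprOf ν f true T1)
    (htnr : tnrOf ν f true T1 < tnrOf ν f false T0)
    (hpos1 : 0 < ∫ x in T0 \ T, f false true x ∂ν)
    (hpos2 : 0 < ∫ x in T \ T1, f true true x ∂ν)
    (hpos3 : 0 < ∫ x in T0 \ T, f false false x ∂ν)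
    (hpos4 : 0 < ∫ x in T \ T1, f true false x ∂ν) :
    unfairness ν f T = dataUnfairness ν f T0 T1 + modelUnfairness ν f T0 T1 T ∧
      0 < modelUnfairness ν f T0 T1 T :=
  unfairness_decomposition_equality_cond1_general ν f hf_int T0 T1 hT0 hT1 T hT hT1T hTT0 htpr htnr
    hpos1 hpos2 hpos3 hpos4
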